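/- Let P(z_1, z_2, conj z_1, conj z_2) be a real-valued polynomial with Re(i ∂P/∂z_1) = 0 (so P = Σ_j x_1^j P_j(z_2, conj z_2)). Suppose also that the vector field Z_2 = ∂_{z_1} + ψ(z_1, z_2) ∂_w with ψ holomorphic satisfies the tangency condition on {Im w = P}, i.e., Re(∂P/∂z_1) = (1/2) Im ψ(z_1, z_2) identically, and that ψ(z_1, z_2) = C' z_1 + α' z_2^l is affine of this form (as forced by the commutator [Z_1, Z_2] ∈ g_{-1} with Z_1 = i∂_{z_1}). Then ∂P/∂x_1 = 2C x_1 + Re(α z_2^l) for suitable real C and complex α, hence P = C x_1^2 + x_1 Re(α z_2^l) + P_0(z_2, conj z_2). -/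
import Mathlib
open Complex ComplexConjugate MvPolynomial

noncomputable def vvline (a b z2 : ℂ) : Fin 4 → Polynomial ℂ :=
  ![Polynomial.C a + Polynomial.C b * Polynomial.X, Polynomial.C z2,
    Polynomial.C (conj a) + Polynomial.C (conj b) * Polynomial.X, Polynomial.C (conj z2)]

lemma aux_aeval_eval (v : Fin 4 → Polynomial ℂ) (p : MvPolynomial (Fin 4) ℂ) (y : ℂ) :
    (MvPolynomial.aeval v p).eval y = MvPolynomial.eval (fun i => (v i).eval y) p := by
  induction p using MvPolynomial.induction_on with
  | C a => simp
  | add p q hp hq => simp [hp, hq]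
  | mul_X p i hp => simp [hp]

lemma line_eval (P : MvPolynomial (Fin 4) ℂ) (a b z2 : ℂ) (t : ℝ) :
    (MvPolynomial.aeval (vvline a b z2) P).eval (t : ℂ)
      = MvPolynomial.eval ![a + b*t, z2, conj (a + b*t), conj z2] P := by
  rw [aux_aeval_eval]
  have h : (fun i => (vvline a b z2 i).eval (t : ℂ))
      = ![a + b*t, z2, conj (a + b*t), conj z2] := by
    funext i
    fin_cases i <;> simp [vvline, map_add, map_mul, Complex.conj_ofReal]
  rw [h]

lemma aux_derivative_aeval (v : Fin 4 → Polynomial ℂ) (p : MvPolynomial (Fin 4) ℂ) :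
    Polynomial.derivative (MvPolynomial.aeval v p)
      = ∑ i : Fin 4, MvPolynomial.aeval v (MvPolynomial.pderiv i p)
          * Polynomial.derivative (v i) := by
  induction p using MvPolynomial.induction_on with
  | C a => simp
  | add p q hp hq => simp [hp, hq, ← Finset.sum_add_distrib, add_mul]
  | mul_X p i hp =>
    simp only [map_mul, map_add, MvPolynomial.aeval_X, Polynomial.derivative_mul,
      MvPolynomial.pderiv_mul, MvPolynomial.pderiv_X, add_mul, Finset.sum_add_distrib]
    congr 1
    · rw [hp, Finset.sum_mul]
      exact Finset.sum_congr rfl fun j _ => by ring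
    · rw [Finset.sum_eq_single i]
      · simp
      · intro j _ hj
        simp [Pi.single_apply, hj.symm]
      · simp

lemma line_deriv (P : MvPolynomial (Fin 4) ℂ) (a b z2 : ℂ) :
    Polynomial.derivative (MvPolynomial.aeval (vvline a b z2) P)
      = MvPolynomial.aeval (vvline a b z2) (MvPolynomial.pderiv 0 P) * Polynomial.C b
        + MvPolynomial.aeval (vvline a b z2) (MvPolynomial.pderiv 2 P)
            * Polynomial.C (conj b) := by
  rw [aux_derivative_aeval, Fin.sum_univ_four]
  have h0 : vvline a b z2 0 = Polynomial.C a + Polynomial.C b * Polynomial.X := rfl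
  have h1 : vvline a b z2 1 = Polynomial.C z2 := rfl
  have h2 : vvline a b z2 2 = Polynomial.C (conj a) + Polynomial.C (conj b) * Polynomial.X := rfl
  have h3 : vvline a b z2 3 = Polynomial.C (conj z2) := rfl
  rw [h0, h1, h2, h3]
  simp

lemma aux_zero_of_real (r : Polynomial ℂ) (h : ∀ x : ℝ, r.eval (x : ℂ) = 0) : r = 0 := by
  apply Polynomial.eq_zero_of_infinite_isRoot
  apply Set.infinite_of_injective_forall_mem (f := fun x : ℝ => (x : ℂ))
    Complex.ofReal_injective
  exact fun x => h x

lemma aux_conj_eval (r : Polynomial ℂ) (x : ℝ) :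
    (starRingEnd ℂ) (r.eval (x : ℂ)) = (r.map (starRingEnd ℂ)).eval (x : ℂ) := by
  rw [Polynomial.eval_map, ← Polynomial.eval₂_at_apply]
  simp

lemma line_real (P : MvPolynomial (Fin 4) ℂ)
    (hreal : ∀ z1 z2 : ℂ, (MvPolynomial.eval ![z1, z2, conj z1, conj z2] P).im = 0)
    (a b z2 : ℂ) :
    (MvPolynomial.aeval (vvline a b z2) P).map (starRingEnd ℂ)
      = MvPolynomial.aeval (vvline a b z2) P := by
  rw [← sub_eq_zero]
  apply aux_zero_of_real
  intro x
  rw [Polynomial.eval_sub, ← aux_conj_eval, line_eval, sub_eq_zero,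
    Complex.conj_eq_iff_im]
  exact hreal _ _

lemma line_deriv_real (P : MvPolynomial (Fin 4) ℂ)
    (hreal : ∀ z1 z2 : ℂ, (MvPolynomial.eval ![z1, z2, conj z1, conj z2] P).im = 0)
    (a b z2 : ℂ) (t : ℝ) :
    ((Polynomial.derivative (MvPolynomial.aeval (vvline a b z2) P)).eval (t : ℂ)).im = 0 := by
  rw [← Complex.conj_eq_iff_im, aux_conj_eval, ← Polynomial.derivative_map,
    line_real P hreal]

lemma key_b (P : MvPolynomial (Fin 4) ℂ)
    (hreal : ∀ z1 z2 : ℂ, (MvPolynomial.eval ![z1, z2, conj z1, conj z2] P).im = 0)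
    (b z1 z2 : ℂ) :
    ((MvPolynomial.eval ![z1, z2, conj z1, conj z2] (MvPolynomial.pderiv 0 P)) * b
      + (MvPolynomial.eval ![z1, z2, conj z1, conj z2] (MvPolynomial.pderiv 2 P))
          * conj b).im = 0 := by
  have key := line_deriv_real P hreal z1 b z2 0
  have e0 := line_eval (MvPolynomial.pderiv 0 P) z1 b z2 0
  have e2 := line_eval (MvPolynomial.pderiv 2 P) z1 b z2 0
  simp only [Complex.ofReal_zero, mul_zero, add_zero] at e0 e2
  rw [line_deriv] at key
  simp only [Complex.ofReal_zero, Polynomial.eval_add, Polynomial.eval_mul,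
    Polynomial.eval_C, e0, e2] at key
  exact key

lemma aux_eval_bind (f : Fin 4 → MvPolynomial (Fin 2) ℂ) (p : MvPolynomial (Fin 4) ℂ)
    (v : Fin 2 → ℂ) :
    MvPolynomial.eval v (MvPolynomial.bind₁ f p)
      = MvPolynomial.eval (fun i => MvPolynomial.eval v (f i)) p := by
  induction p using MvPolynomial.induction_on with
  | C a => simp
  | add p q hp hq => simp [hp, hq]
  | mul_X p i hp => simp [hp]

/-- Lemma 5.1 normal form.  If the real-valued polynomial `P` is independent of
`y₁ = Im z₁` (i.e. `Re(i ∂P/∂z₁) = 0`) and the shift `Z₂ = ∂_{z₁} + ψ ∂_w` with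
`ψ = C' z₁ + α' z₂^l` satisfies the tangency condition `Re(∂P/∂z₁) = (1/2) Im ψ`,
then `P = C x₁² + x₁ Re(α z₂^l) + P₀(z₂, z̄₂)` for suitable `C ∈ ℝ`, `α ∈ ℂ`. -/
theorem shift_pair_normal_form (P : MvPolynomial (Fin 4) ℂ) (Cp αp : ℂ) (l : ℕ)
    (hreal : ∀ z1 z2 : ℂ, (eval ![z1, z2, conj z1, conj z2] P).im = 0)
    (hindep : ∀ z1 z2 : ℂ, (I * eval ![z1, z2, conj z1, conj z2] (pderiv 0 P)).re = 0)
    (htang : ∀ z1 z2 : ℂ,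
      (eval ![z1, z2, conj z1, conj z2] (pderiv 0 P)).re
        = (1 / 2) * (Cp * z1 + αp * z2 ^ l).im) :
    ∃ (C : ℝ) (α : ℂ) (Q : MvPolynomial (Fin 2) ℂ),
      ∀ z1 z2 : ℂ,
        (eval ![z1, z2, conj z1, conj z2] P).re
          = C * z1.re ^ 2 + z1.re * (α * z2 ^ l).re + (eval ![z2, conj z2] Q).re := by
  -- g is real-valued
  have gim : ∀ z1 z2 : ℂ, (eval ![z1, z2, conj z1, conj z2] (pderiv 0 P)).im = 0 := by
    intro z1 z2
    have := hindep z1 z2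
    simp only [Complex.mul_re, Complex.I_re, Complex.I_im, zero_mul, one_mul,
      zero_sub, neg_eq_zero] at this
    exact this
  -- h = g
  have hgh : ∀ z1 z2 : ℂ, eval ![z1, z2, conj z1, conj z2] (pderiv 2 P)
      = eval ![z1, z2, conj z1, conj z2] (pderiv 0 P) := by
    intro z1 z2
    have k1 := key_b P hreal 1 z1 z2
    have k2 := key_b P hreal I z1 z2
    simp only [mul_one, map_one, Complex.add_im, Complex.conj_I, mul_neg,
      Complex.mul_im, Complex.mul_re, Complex.I_re, Complex.I_im, mul_zero, mul_one,
      zero_add, zero_sub, Complex.neg_im, Complex.neg_re, gim z1 z2, zero_add] at k1 k2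
    apply Complex.ext
    · linarith [k2]
    · linarith [k1, gim z1 z2]
  -- value of g
  have gval : ∀ z1 z2 : ℂ, eval ![z1, z2, conj z1, conj z2] (pderiv 0 P)
      = ((2⁻¹ * (Cp * z1 + αp * z2 ^ l).im : ℝ) : ℂ) := by
    intro z1 z2
    apply Complex.ext
    · rw [htang z1 z2, Complex.ofReal_re]; ring
    · simp [gim z1 z2]
  -- Step 2: independence of y₁
  have indep : ∀ (x1 : ℝ) (z2 : ℂ) (y : ℝ),
      eval ![(x1 : ℂ) + I * y, z2, conj ((x1 : ℂ) + I * y), conj z2] P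
        = eval ![(x1 : ℂ), z2, (x1 : ℂ), conj z2] P := by
    intro x1 z2 y
    have hd : Polynomial.derivative (MvPolynomial.aeval (vvline (x1 : ℂ) I z2) P) = 0 := by
      apply aux_zero_of_real
      intro t
      rw [line_deriv]
      have e0 := line_eval (pderiv 0 P) (x1 : ℂ) I z2 t
      have e2 := line_eval (pderiv 2 P) (x1 : ℂ) I z2 t
      simp only [Polynomial.eval_add, Polynomial.eval_mul, Polynomial.eval_C, e0, e2]
      rw [hgh, Complex.conj_I]
      ring
    have hC := Polynomial.eq_C_of_derivative_eq_zero hd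
    have ey := line_eval P (x1 : ℂ) I z2 y
    have e0 := line_eval P (x1 : ℂ) I z2 0
    rw [hC] at ey e0
    simp only [Polynomial.eval_C] at ey e0
    rw [← ey, e0]
    have hv : ![(x1 : ℂ) + I * ((0:ℝ) : ℂ), z2, conj ((x1 : ℂ) + I * ((0:ℝ) : ℂ)), conj z2]
        = ![(x1 : ℂ), z2, (x1 : ℂ), conj z2] := by
      funext i
      fin_cases i <;> simp [Complex.conj_ofReal]
    rw [hv]
  -- Step 3: the x₁ profile
  have profile : ∀ (z2 : ℂ) (x : ℝ),
      eval ![(x : ℂ), z2, (x : ℂ), conj z2] P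
        = ((Cp.im / 2 : ℝ) : ℂ) * (x : ℂ) ^ 2
          + (((αp * z2 ^ l).im : ℝ) : ℂ) * (x : ℂ)
          + eval ![0, z2, 0, conj z2] P := by
    intro z2 x
    set p0 : Polynomial ℂ := MvPolynomial.aeval (vvline 0 1 z2) P with hp0
    set s : Polynomial ℂ := p0 - (Polynomial.C (((Cp.im / 2 : ℝ) : ℂ)) * Polynomial.X ^ 2
      + Polynomial.C ((((αp * z2 ^ l).im : ℝ) : ℂ)) * Polynomial.X
      + Polynomial.C (p0.eval 0)) with hs
    have hds : Polynomial.derivative s = 0 := by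
      apply aux_zero_of_real
      intro t
      rw [hs]
      simp only [Polynomial.derivative_sub, Polynomial.derivative_add,
        Polynomial.derivative_C_mul, Polynomial.derivative_X_pow, Polynomial.derivative_X,
        Polynomial.derivative_C, add_zero, mul_one]
      rw [hp0, line_deriv]
      have e0 := line_eval (pderiv 0 P) 0 1 z2 t
      have e2 := line_eval (pderiv 2 P) 0 1 z2 t
      simp only [zero_add, one_mul] at e0 e2
      simp only [Polynomial.eval_sub, Polynomial.eval_add, Polynomial.eval_mul,
        Polynomial.eval_C, Polynomial.eval_pow, Polynomial.eval_X, map_one, mul_one]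
      rw [e0, e2, hgh, gval]
      have him : (Cp * (t : ℂ) + αp * z2 ^ l).im = Cp.im * t + (αp * z2 ^ l).im := by
        simp
      rw [him]
      norm_num
      ring
    have hsC := Polynomial.eq_C_of_derivative_eq_zero hds
    have hs0 : s.coeff 0 = 0 := by
      rw [Polynomial.coeff_zero_eq_eval_zero, hs]
      simp
    rw [hs0] at hsC
    have hzero : s = 0 := by rw [hsC]; simp
    have hx : p0.eval (x : ℂ) = ((Cp.im / 2 : ℝ) : ℂ) * (x : ℂ) ^ 2
        + (((αp * z2 ^ l).im : ℝ) : ℂ) * (x : ℂ) + p0.eval 0 := by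
      have h2 := congrArg (Polynomial.eval (x : ℂ)) hzero
      rw [hs] at h2
      simp only [Polynomial.eval_sub, Polynomial.eval_add, Polynomial.eval_mul,
        Polynomial.eval_C, Polynomial.eval_pow, Polynomial.eval_X, Polynomial.eval_zero] at h2
      linear_combination h2
    have ex := line_eval P 0 1 z2 x
    simp only [zero_add, one_mul] at ex
    rw [← hp0] at ex
    have e0' := line_eval P 0 1 z2 0
    simp only [zero_add, one_mul, Complex.ofReal_zero, map_zero] at e0'
    rw [← hp0] at e0'
    have hv : ![(x : ℂ), z2, (x : ℂ), conj z2] = ![(x : ℂ), z2, conj (x : ℂ), conj z2] := by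
      funext i
      fin_cases i <;> simp [Complex.conj_ofReal]
    rw [hv, ← ex, hx, e0']
  -- Assemble
  refine ⟨Cp.im / 2, -I * αp, MvPolynomial.bind₁ ![0, X 0, 0, X 1] P, ?_⟩
  intro z1 z2
  have hz1 : (↑z1.re : ℂ) + I * ↑z1.im = z1 := by
    rw [mul_comm]; exact Complex.re_add_im z1
  have main := indep z1.re z2 z1.im
  rw [hz1] at main
  rw [main, profile z2 z1.re]
  have hQ : eval ![z2, conj z2] (MvPolynomial.bind₁ ![0, X 0, 0, X 1] P)
      = eval ![0, z2, 0, conj z2] P := by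
    rw [aux_eval_bind]
    have hv : (fun i => eval ![z2, conj z2] ((![0, X 0, 0, X 1] : Fin 4 → MvPolynomial (Fin 2) ℂ) i))
        = ![0, z2, 0, conj z2] := by
      funext i
      fin_cases i <;> simp
    rw [hv]
  rw [← hQ]
  have hα : ((-I * αp) * z2 ^ l).re = (αp * z2 ^ l).im := by
    have he : (-I * αp) * z2 ^ l = -(I * (αp * z2 ^ l)) := by ring
    rw [he, Complex.neg_re, Complex.mul_re, Complex.I_re, Complex.I_im]
    ring
  rw [hα]
  simp only [← Complex.ofReal_pow, ← Complex.ofReal_mul, ← Complex.ofReal_add,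
    Complex.add_re, Complex.ofReal_re]
  ring
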